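/- arXiv:2408.05030 — 3 statements merged into one kernel-verified Lean document; each statement's English description precedes it below -/
import Mathlib

section
/- Let a > 0 be such that ln(1-x) ≥ -a x for all x in [0, M] where M = (√2/√π) ∫_{1/(2T)}^∞ e^{-u²/2} du < 1 for some T > 0. Then for every t ∈ (0, T], ∑_{k=0}^∞ ln(1 - (√2/√(πt)) ∫_{k+1/2}^∞ e^{-u²/(2t)} du) ≥ -(10√(2T) a/√π) e^{-1/(8t)}. -/
/-!
Write `X_k = P(|Z| > (k + 1/2)/√t)` for a standard normal `Z`, so that the `k`-th summand is
`log (1 - X_k)`. Each `-log (1 - X_k)` is at most `5 a X_k`: if `T ≥ 1`, every `X_k` lies in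
`[0, M]` and the hypothesis on `log` applies; if `T < 1`, every `X_k ≤ P(|Z| > 1/2) ≤ 4/5`, where
`-log (1 - x) ≤ x / (1 - x) ≤ 5 x`, and the hypothesis at `x = M` forces `a ≥ 1`.
For the sum of the tails, write each as an integral over `v > 1/(2√t)`: at most `2 √t v` of the
thresholds `(k + 1/2)/√t` lie below such a `v`, so
`∑ X_k ≤ 2 √(2t/π) ∫_{1/(2√t)}^∞ v e^{-v²/2} dv = 2 √(2t/π) e^{-1/(8t)}`.
-/

open Real MeasureTheory Set
open scoped Finset

noncomputable def gaussTail (c : ℝ) : ℝ := ∫ v in Ioi c, exp (-v ^ 2 / 2)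

lemma integrable_exp_neg_sq_div_two : Integrable fun v : ℝ => exp (-v ^ 2 / 2) := by
  simpa [neg_div, div_eq_inv_mul] using integrable_exp_neg_mul_sq (b := 1 / 2) (by norm_num)

lemma integrable_mul_exp_neg_sq_div_two : Integrable fun v : ℝ => v * exp (-v ^ 2 / 2) := by
  simpa [neg_div, div_eq_inv_mul] using integrable_mul_exp_neg_mul_sq (b := 1 / 2) (by norm_num)

lemma gaussTail_nonneg (c : ℝ) : 0 ≤ gaussTail c :=
  setIntegral_nonneg measurableSet_Ioi fun _ _ => (exp_pos _).le

lemma gaussTail_pos (c : ℝ) : 0 < gaussTail c := by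
  rw [gaussTail, setIntegral_pos_iff_support_of_nonneg_ae
    (.of_forall fun _ => (exp_pos _).le) integrable_exp_neg_sq_div_two.integrableOn]
  simp [Function.support, (exp_pos _).ne']

lemma gaussTail_antitone : Antitone gaussTail := fun _ _ h =>
  setIntegral_mono_set integrable_exp_neg_sq_div_two.integrableOn
    (.of_forall fun _ => (exp_pos _).le) (Ioi_subset_Ioi h).eventuallyLE

lemma gaussTail_zero : gaussTail 0 = √(2 * π) / 2 := by
  have h := integral_gaussian_Ioi (1 / 2)
  simp only [neg_mul, ← div_eq_inv_mul, one_div, div_inv_eq_mul] at h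
  rw [gaussTail, mul_comm]
  simpa only [neg_div] using h

lemma gaussTail_zero_eq_add {c : ℝ} (hc : 0 ≤ c) :
    gaussTail 0 = (∫ v in Ioc 0 c, exp (-v ^ 2 / 2)) + gaussTail c := by
  rw [gaussTail, gaussTail, ← setIntegral_union (Ioc_disjoint_Ioi le_rfl) measurableSet_Ioi
    integrable_exp_neg_sq_div_two.integrableOn integrable_exp_neg_sq_div_two.integrableOn,
    Ioc_union_Ioi_eq_Ioi hc]

lemma integral_Ioi_mul_exp_neg_sq_div_two (c : ℝ) :
    ∫ v in Ioi c, v * exp (-v ^ 2 / 2) = exp (-c ^ 2 / 2) := by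
  have hderiv (x : ℝ) : HasDerivAt (fun v : ℝ => -exp (-v ^ 2 / 2)) (x * exp (-x ^ 2 / 2)) x := by
    have h : HasDerivAt (fun v : ℝ => -v ^ 2 / 2) (-x) x :=
      ((hasDerivAt_pow 2 x).neg.div_const 2).congr_deriv (by push_cast; ring)
    exact h.exp.neg.congr_deriv (by ring)
  have hlim : Filter.Tendsto (fun v : ℝ => -exp (-v ^ 2 / 2)) Filter.atTop (nhds 0) := by
    simpa [Function.comp_def, neg_div] using (tendsto_exp_neg_atTop_nhds_zero.comp
      ((Filter.tendsto_pow_atTop two_ne_zero).atTop_div_const two_pos)).neg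
  simpa using integral_Ioi_of_hasDerivAt_of_tendsto' (fun x _ => hderiv x)
    integrable_mul_exp_neg_sq_div_two.integrableOn hlim

lemma card_filter_add_half_div_lt_le {s v : ℝ} (hs : 0 < s) (hv : 1 / 2 < s * v) (n : ℕ) :
    (#{k ∈ Finset.range n | ((k : ℕ) + 1 / 2 : ℝ) / s < v} : ℝ) ≤ 2 * s * v := by
  have hsub : {k ∈ Finset.range n | ((k : ℕ) + 1 / 2 : ℝ) / s < v} ⊆
      Finset.range ⌈s * v - 1 / 2⌉₊ := by
    intro k hk
    simp only [Finset.mem_filter, div_lt_iff₀ hs] at hk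
    exact Finset.mem_range.2 (Nat.lt_ceil.2 (by linarith))
  calc (#{k ∈ Finset.range n | ((k : ℕ) + 1 / 2 : ℝ) / s < v} : ℝ)
      ≤ ⌈s * v - 1 / 2⌉₊ := by simpa using Finset.card_le_card hsub
    _ ≤ 2 * s * v := by linarith [Nat.ceil_lt_add_one (by linarith : 0 ≤ s * v - 1 / 2)]

lemma sum_range_gaussTail_le {s : ℝ} (hs : 0 < s) (n : ℕ) :
    ∑ k ∈ Finset.range n, gaussTail ((k + 1 / 2) / s) ≤ 2 * s * exp (-1 / (8 * s ^ 2)) := by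
  set f : ℝ → ℝ := fun v => exp (-v ^ 2 / 2)
  set x : ℕ → ℝ := fun k => (k + 1 / 2) / s
  have hx (k : ℕ) : 1 / (2 * s) ≤ x k := by
    rw [div_le_div_iff₀ (by positivity) hs]
    nlinarith [k.cast_nonneg (α := ℝ)]
  have hint (k : ℕ) : IntegrableOn ((Ioi (x k)).indicator f) (Ioi (1 / (2 * s))) :=
    (integrable_exp_neg_sq_div_two.indicator measurableSet_Ioi).integrableOn
  have htail (k : ℕ) : gaussTail (x k) = ∫ v in Ioi (1 / (2 * s)), (Ioi (x k)).indicator f v := by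
    rw [setIntegral_indicator measurableSet_Ioi, Ioi_inter_Ioi, max_eq_right (hx k), gaussTail]
  have hcount {v : ℝ} (hv : v ∈ Ioi (1 / (2 * s))) :
      ∑ k ∈ Finset.range n, (Ioi (x k)).indicator f v ≤ 2 * s * (v * f v) := by
    have hsv : 1 / 2 < s * v := by
      rw [mem_Ioi, div_lt_iff₀ (by positivity)] at hv; linarith
    simp only [indicator_apply, mem_Ioi, ← Finset.sum_filter, Finset.sum_const, nsmul_eq_mul]
    have := mul_le_mul_of_nonneg_right (card_filter_add_half_div_lt_le hs hsv n)
      (exp_pos (-v ^ 2 / 2)).le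
    linarith
  calc ∑ k ∈ Finset.range n, gaussTail (x k)
      = ∫ v in Ioi (1 / (2 * s)), ∑ k ∈ Finset.range n, (Ioi (x k)).indicator f v := by
        rw [integral_finsetSum _ fun k _ => hint k]
        exact Finset.sum_congr rfl fun k _ => htail k
    _ ≤ ∫ v in Ioi (1 / (2 * s)), 2 * s * (v * f v) :=
        setIntegral_mono_on (integrable_finsetSum _ fun k _ => hint k)
          (integrable_mul_exp_neg_sq_div_two.integrableOn.const_mul _) measurableSet_Ioi
          fun v hv => hcount hv
    _ = 2 * s * exp (-1 / (8 * s ^ 2)) := by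
        rw [integral_const_mul, integral_Ioi_mul_exp_neg_sq_div_two]
        congr 2
        field_simp
        ring

lemma integral_Ioc_zero_half_exp_neg_sq_div_two_ge :
    23 / 48 ≤ ∫ v in Ioc (0 : ℝ) (1 / 2), exp (-v ^ 2 / 2) := by
  rw [← intervalIntegral.integral_of_le (by norm_num)]
  have hpoly : IntervalIntegrable (fun v : ℝ => 1 - v ^ 2 / 2) volume 0 (1 / 2) :=
    intervalIntegrable_const.sub ((intervalIntegral.intervalIntegrable_pow 2).div_const 2)
  calc (23 / 48 : ℝ) = ∫ v in (0 : ℝ)..(1 / 2), (1 - v ^ 2 / 2) := by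
        rw [intervalIntegral.integral_sub intervalIntegrable_const
          ((intervalIntegral.intervalIntegrable_pow 2).div_const 2),
          intervalIntegral.integral_div, integral_pow]
        norm_num
    _ ≤ ∫ v in (0 : ℝ)..(1 / 2), exp (-v ^ 2 / 2) :=
        intervalIntegral.integral_mono_on (by norm_num) hpoly
          ((by fun_prop : Continuous fun v : ℝ => exp (-v ^ 2 / 2)).intervalIntegrable _ _)
          fun v _ => by linarith [add_one_le_exp (-v ^ 2 / 2)]

/-- `P(|Z| > c)` for a standard normal `Z`; by the reflection principle, also the probability
that a standard Brownian motion reaches level `c` by time `1`. -/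
noncomputable def absNormalTail (c : ℝ) : ℝ := √2 / √π * gaussTail c

lemma absNormalTail_nonneg (c : ℝ) : 0 ≤ absNormalTail c :=
  mul_nonneg (by positivity) (gaussTail_nonneg c)

lemma absNormalTail_pos (c : ℝ) : 0 < absNormalTail c :=
  mul_pos (by positivity) (gaussTail_pos c)

lemma absNormalTail_antitone : Antitone absNormalTail := fun _ _ h =>
  mul_le_mul_of_nonneg_left (gaussTail_antitone h) (by positivity)

lemma absNormalTail_zero : absNormalTail 0 = 1 := by
  have hπ : 0 < √π := sqrt_pos.2 pi_pos
  rw [absNormalTail, gaussTail_zero, sqrt_mul zero_le_two]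
  field_simp
  exact sq_sqrt zero_le_two

lemma absNormalTail_le_one {c : ℝ} (hc : 0 ≤ c) : absNormalTail c ≤ 1 :=
  absNormalTail_zero ▸ absNormalTail_antitone hc

lemma sqrt_two_div_sqrt_pi_mul_integral_Ioi_eq {t : ℝ} (ht : 0 < t) (b : ℝ) :
    √2 / √(π * t) * ∫ u in Ioi b, exp (-u ^ 2 / (2 * t)) = absNormalTail (b / √t) := by
  have hs : 0 < √t := sqrt_pos.2 ht
  have hsub := integral_comp_mul_left_Ioi (fun u => exp (-u ^ 2 / (2 * t))) (b / √t) hs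
  have hscale (x : ℝ) : exp (-(√t * x) ^ 2 / (2 * t)) = exp (-x ^ 2 / 2) := by
    rw [mul_pow, sq_sqrt ht.le]
    field_simp
  simp only [mul_div_cancel₀ _ hs.ne', hscale, smul_eq_mul] at hsub
  rw [absNormalTail, gaussTail, hsub, sqrt_mul pi_pos.le]
  field_simp

lemma absNormalTail_half_le : absNormalTail (1 / 2) ≤ 4 / 5 := by
  have hπ : 0 < √π := sqrt_pos.2 pi_pos
  have hK : 1 / 2 ≤ √2 / √π := by
    rw [div_le_div_iff₀ two_pos hπ, one_mul]
    have h2 : 1 ≤ √2 := one_le_sqrt.2 one_le_two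
    have hπ4 : √π ≤ 2 := (sqrt_le_left zero_le_two).2 (by linarith [pi_le_four])
    linarith
  have hsplit : absNormalTail 0 = √2 / √π * (∫ v in Ioc (0 : ℝ) (1 / 2), exp (-v ^ 2 / 2)) +
      absNormalTail (1 / 2) := by
    rw [absNormalTail, absNormalTail, gaussTail_zero_eq_add one_half_pos.le, mul_add]
  rw [absNormalTail_zero] at hsplit
  nlinarith [integral_Ioc_zero_half_exp_neg_sq_div_two_ge]

lemma summable_absNormalTail {s : ℝ} (hs : 0 < s) :
    Summable fun k : ℕ => absNormalTail ((k + 1 / 2) / s) :=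
  (summable_of_sum_range_le (fun _ => gaussTail_nonneg _)
    (sum_range_gaussTail_le hs)).mul_left _

lemma tsum_absNormalTail_le {t : ℝ} (ht : 0 < t) :
    ∑' k : ℕ, absNormalTail ((k + 1 / 2) / √t) ≤ 2 * √(2 * t) / √π * exp (-1 / (8 * t)) := by
  have hsum := Real.tsum_le_of_sum_range_le (fun _ => gaussTail_nonneg _)
    (sum_range_gaussTail_le (sqrt_pos.2 ht))
  rw [sq_sqrt ht.le] at hsum
  calc ∑' k : ℕ, absNormalTail ((k + 1 / 2) / √t)
      = √2 / √π * ∑' k : ℕ, gaussTail ((k + 1 / 2) / √t) := tsum_mul_left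
    _ ≤ √2 / √π * (2 * √t * exp (-1 / (8 * t))) := by gcongr
    _ = 2 * √(2 * t) / √π * exp (-1 / (8 * t)) := by rw [sqrt_mul zero_le_two]; ring

lemma neg_log_one_sub_le_div {x : ℝ} (hx : x < 1) : -log (1 - x) ≤ x / (1 - x) := by
  have hx' : 0 < 1 - x := sub_pos.2 hx
  have h : x / (1 - x) = (1 - x)⁻¹ - 1 := by field_simp; ring
  linarith [one_sub_inv_le_log_of_pos hx']

lemma one_le_of_log_one_sub_ge {a M : ℝ} (hM0 : 0 < M) (hM1 : M < 1) (h : log (1 - M) ≥ -a * M) :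
    1 ≤ a := by
  have := log_le_sub_one_of_pos (sub_pos.2 hM1)
  nlinarith

lemma tsum_log_one_sub_ge {ι : Type*} {f : ι → ℝ} {C : ℝ} (hf : Summable f)
    (hf0 : ∀ i, 0 ≤ f i) (hf1 : ∀ i, f i ≤ 1) (hC : ∀ i, -log (1 - f i) ≤ C * f i) :
    -(C * ∑' i, f i) ≤ ∑' i, log (1 - f i) := by
  have hg0 (i : ι) : 0 ≤ -log (1 - f i) :=
    neg_nonneg.2 (log_nonpos (sub_nonneg.2 (hf1 i)) (by linarith [hf0 i]))
  have hg := (hf.mul_left C).of_nonneg_of_le hg0 hC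
  calc -(C * ∑' i, f i) = -∑' i, C * f i := by rw [tsum_mul_left]
    _ ≤ -∑' i, -log (1 - f i) := neg_le_neg (hg.tsum_le_tsum hC (hf.mul_left C))
    _ = ∑' i, log (1 - f i) := by rw [tsum_neg, neg_neg]

lemma neg_log_one_sub_absNormalTail_le {T a t c : ℝ} (ha : 1 ≤ a)
    (hlog : ∀ x ∈ Icc 0 (absNormalTail (1 / (2 * T))), log (1 - x) ≥ -a * x)
    (ht : 0 < t) (htT : t ≤ T) (hc : 1 / (2 * √t) ≤ c) :
    -log (1 - absNormalTail c) ≤ 5 * a * absNormalTail c := by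
  have hX0 := absNormalTail_nonneg c
  rcases le_or_gt 1 T with hT | hT
  · have hcT : 1 / (2 * T) ≤ c := by
      refine le_trans (one_div_le_one_div_of_le (by positivity) ?_) hc
      linarith [sqrt_le_sqrt htT, sqrt_le_self_iff.2 (Or.inr hT)]
    have := hlog _ ⟨hX0, absNormalTail_antitone hcT⟩
    nlinarith
  · have hc : 1 / 2 ≤ c := by
      refine le_trans ?_ hc
      rw [one_div_le_one_div (by norm_num) (by positivity)]
      linarith [sqrt_le_one.2 (htT.trans hT.le)]
    have hX := (absNormalTail_antitone hc).trans absNormalTail_half_le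
    have hdiv : absNormalTail c / (1 - absNormalTail c) ≤ 5 * absNormalTail c := by
      rw [div_le_iff₀ (by linarith)]
      nlinarith
    nlinarith [neg_log_one_sub_le_div (hX.trans_lt (by norm_num))]

theorem stmt3_general (T a : ℝ)
    (hM : Real.sqrt 2 / Real.sqrt Real.pi *
        ∫ u in Set.Ioi (1 / (2 * T)), Real.exp (-u ^ 2 / 2) < 1)
    (hlog : ∀ x ∈ Set.Icc (0 : ℝ)
        (Real.sqrt 2 / Real.sqrt Real.pi *
          ∫ u in Set.Ioi (1 / (2 * T)), Real.exp (-u ^ 2 / 2)),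
        Real.log (1 - x) ≥ -a * x) :
    ∀ t ∈ Set.Ioc (0 : ℝ) T,
      ∑' k : ℕ, Real.log (1 - Real.sqrt 2 / Real.sqrt (Real.pi * t) *
          ∫ u in Set.Ioi ((k : ℝ) + 1 / 2), Real.exp (-u ^ 2 / (2 * t))) ≥
        -(10 * Real.sqrt (2 * T) * a / Real.sqrt Real.pi) * Real.exp (-1 / (8 * t)) := by
  rintro t ⟨ht, htT⟩
  have hs : 0 < √t := sqrt_pos.2 ht
  have ha : 1 ≤ a := one_le_of_log_one_sub_ge (absNormalTail_pos _) hM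
    (hlog _ ⟨absNormalTail_nonneg _, le_rfl⟩)
  have hterm (k : ℕ) := neg_log_one_sub_absNormalTail_le (c := (k + 1 / 2) / √t) ha hlog ht htT
    (by rw [div_le_div_iff₀ (by positivity) hs]; nlinarith [k.cast_nonneg (α := ℝ)])
  simp only [sqrt_two_div_sqrt_pi_mul_integral_Ioi_eq ht]
  refine le_trans ?_ (tsum_log_one_sub_ge (summable_absNormalTail hs)
    (fun _ => absNormalTail_nonneg _) (fun _ => absNormalTail_le_one (by positivity)) hterm)
  rw [neg_mul, neg_le_neg_iff]
  calc 5 * a * ∑' k : ℕ, absNormalTail ((k + 1 / 2) / √t)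
      ≤ 5 * a * (2 * √(2 * t) / √π * exp (-1 / (8 * t))) := by
        gcongr; exact tsum_absNormalTail_le ht
    _ ≤ 5 * a * (2 * √(2 * T) / √π * exp (-1 / (8 * t))) := by gcongr
    _ = 10 * √(2 * T) * a / √π * exp (-1 / (8 * t)) := by ring

theorem stmt3 (T a : ℝ) (hT : 0 < T) (ha : 0 < a)
    (hM : Real.sqrt 2 / Real.sqrt Real.pi *
        ∫ u in Set.Ioi (1 / (2 * T)), Real.exp (-u ^ 2 / 2) < 1)
    (hlog : ∀ x ∈ Set.Icc (0 : ℝ)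
        (Real.sqrt 2 / Real.sqrt Real.pi *
          ∫ u in Set.Ioi (1 / (2 * T)), Real.exp (-u ^ 2 / 2)),
        Real.log (1 - x) ≥ -a * x) :
    ∀ t ∈ Set.Ioc (0 : ℝ) T,
      ∑' k : ℕ, Real.log (1 - Real.sqrt 2 / Real.sqrt (Real.pi * t) *
          ∫ u in Set.Ioi ((k : ℝ) + 1 / 2), Real.exp (-u ^ 2 / (2 * t))) ≥
        -(10 * Real.sqrt (2 * T) * a / Real.sqrt Real.pi) * Real.exp (-1 / (8 * t)) :=
  stmt3_general T a hM hlog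
end

section
/- Let w_k, k ∈ ℤ, be independent standard Brownian motions on [0,t] with w_k(0) = k. For integers 2 ≤ n ≤ j, the probability that max_{k ∈ {0,…,j-n+1}} max_{s∈[0,t]} w_k(s) > j is at most (√(2t)/√π) e^{-(n-2)²/(2t)}. -/
/-!
By the union bound the probability is at most `∑_{k < N} c ∫_{j-k}^∞ e^{-u²/2t} du` with
`N = j - n + 2` and `c = √2 / √(πt)`. For a nonnegative `f` let `H a = ∫_a^∞ (u - a) f u du`
(`tailMoment f a`); then `∫_{a+1}^∞ f ≤ H a - H (a+1)`, so the sum of tails telescopes to at most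
`H (j - N) = H (n - 2)`. Finally `H a ≤ ∫_a^∞ u f u du` for `a ≥ 0`, which for the Gaussian equals
`t e^{-a²/2t}`, and `c t = √(2t) / √π`.
-/

open Real MeasureTheory Set Filter

noncomputable def tailMoment (f : ℝ → ℝ) (a : ℝ) : ℝ := ∫ u in Ioi a, (u - a) * f u

section TailMoment

variable {f : ℝ → ℝ}

lemma tailMoment_nonneg (hf : 0 ≤ f) (a : ℝ) : 0 ≤ tailMoment f a :=
  setIntegral_nonneg measurableSet_Ioi fun u hu =>
    mul_nonneg (sub_nonneg.mpr (le_of_lt hu)) (hf u)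

lemma integrable_sub_mul_of_integrable_mul (hf : Integrable f)
    (hf₁ : Integrable fun u => u * f u) (a : ℝ) :
    Integrable fun u => (u - a) * f u :=
  (hf₁.sub (hf.const_mul a)).congr <| Eventually.of_forall fun u => by
    simp only [Pi.sub_apply]; ring

lemma integral_Ioi_add_one_le_tailMoment_sub (hf : 0 ≤ f) (hfi : Integrable f)
    (hf₁ : Integrable fun u => u * f u) (a : ℝ) :
    ∫ u in Ioi (a + 1), f u ≤ tailMoment f a - tailMoment f (a + 1) := by
  have hsplit : tailMoment f (a + 1) + ∫ u in Ioi (a + 1), f u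
      = ∫ u in Ioi (a + 1), (u - a) * f u := by
    rw [tailMoment, ← integral_add
      (integrable_sub_mul_of_integrable_mul hfi hf₁ _).integrableOn hfi.integrableOn]
    exact setIntegral_congr_fun measurableSet_Ioi fun u _ => by ring
  have hmono : ∫ u in Ioi (a + 1), (u - a) * f u ≤ tailMoment f a := by
    refine setIntegral_mono_set (integrable_sub_mul_of_integrable_mul hfi hf₁ a).integrableOn ?_
      (Ioi_subset_Ioi (by linarith)).eventuallyLE
    filter_upwards [ae_restrict_mem measurableSet_Ioi] with u hu
    exact mul_nonneg (sub_nonneg.mpr (le_of_lt hu)) (hf u)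
  linarith

lemma sum_integral_Ioi_le_tailMoment (hf : 0 ≤ f) (hfi : Integrable f)
    (hf₁ : Integrable fun u => u * f u) (b : ℝ) (N : ℕ) :
    ∑ k ∈ Finset.range N, ∫ u in Ioi (b - k), f u ≤ tailMoment f (b - N) := by
  have hstep : ∀ k ∈ Finset.range N, ∫ u in Ioi (b - k), f u
      ≤ tailMoment f (b - ↑(k + 1)) - tailMoment f (b - k) := by
    intro k _
    have h := integral_Ioi_add_one_le_tailMoment_sub hf hfi hf₁ (b - (k + 1))
    rwa [show b - (k + 1) + 1 = b - k by ring, ← Nat.cast_succ] at h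
  calc ∑ k ∈ Finset.range N, ∫ u in Ioi (b - k), f u
      ≤ ∑ k ∈ Finset.range N, (tailMoment f (b - ↑(k + 1)) - tailMoment f (b - k)) :=
        Finset.sum_le_sum hstep
    _ = tailMoment f (b - N) - tailMoment f b := by
        rw [Finset.sum_range_sub (fun k : ℕ => tailMoment f (b - k)), Nat.cast_zero, sub_zero]
    _ ≤ tailMoment f (b - N) := sub_le_self _ (tailMoment_nonneg hf b)

lemma tailMoment_le_integral_mul (hf : 0 ≤ f) (hfi : Integrable f)
    (hf₁ : Integrable fun u => u * f u) {a : ℝ} (ha : 0 ≤ a) :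
    tailMoment f a ≤ ∫ u in Ioi a, u * f u :=
  setIntegral_mono_on (integrable_sub_mul_of_integrable_mul hfi hf₁ a).integrableOn
    hf₁.integrableOn measurableSet_Ioi fun u _ =>
      mul_le_mul_of_nonneg_right (sub_le_self u ha) (hf u)

end TailMoment

section Gaussian

variable {t : ℝ}

lemma integrable_exp_neg_sq_div (ht : 0 < t) :
    Integrable fun u : ℝ => exp (-u ^ 2 / (2 * t)) := by
  simpa [neg_div, div_eq_inv_mul] using
    integrable_exp_neg_mul_sq (inv_pos.mpr (by positivity : 0 < 2 * t))

lemma integrable_mul_exp_neg_sq_div (ht : 0 < t) :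
    Integrable fun u : ℝ => u * exp (-u ^ 2 / (2 * t)) := by
  simpa [neg_div, div_eq_inv_mul] using
    integrable_mul_exp_neg_mul_sq (inv_pos.mpr (by positivity : 0 < 2 * t))

lemma integral_Ioi_mul_exp_neg_sq_div (ht : 0 < t) (a : ℝ) :
    ∫ u in Ioi a, u * exp (-u ^ 2 / (2 * t)) = t * exp (-a ^ 2 / (2 * t)) := by
  have hderiv : ∀ x ∈ Ici a, HasDerivAt (fun u => -t * exp (-u ^ 2 / (2 * t)))
      (x * exp (-x ^ 2 / (2 * t))) x := by
    intro x _
    refine (((((hasDerivAt_pow 2 x).neg).div_const (2 * t)).exp).const_mul (-t)).congr_deriv ?_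
    simp only [Pi.neg_apply]
    field_simp
    ring
  have hlim : Tendsto (fun u => -t * exp (-u ^ 2 / (2 * t))) atTop (nhds 0) := by
    have h := (tendsto_exp_atBot.comp ((tendsto_neg_atTop_atBot.comp
      (tendsto_pow_atTop two_ne_zero)).atBot_div_const (by positivity : 0 < 2 * t))).const_mul (-t)
    simpa [Function.comp_def, neg_div] using h
  rw [integral_Ioi_of_hasDerivAt_of_tendsto' hderiv (integrable_mul_exp_neg_sq_div ht).integrableOn
    hlim]
  ring

lemma sum_integral_Ioi_exp_neg_sq_div_le (ht : 0 < t) (b : ℝ) (N : ℕ) (hN : (N : ℝ) ≤ b) :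
    ∑ k ∈ Finset.range N, ∫ u in Ioi (b - k), exp (-u ^ 2 / (2 * t))
      ≤ t * exp (-(b - N) ^ 2 / (2 * t)) := by
  have hf : 0 ≤ fun u : ℝ => exp (-u ^ 2 / (2 * t)) := fun u => (exp_pos _).le
  calc _ ≤ tailMoment (fun u => exp (-u ^ 2 / (2 * t))) (b - N) :=
        sum_integral_Ioi_le_tailMoment hf (integrable_exp_neg_sq_div ht)
          (integrable_mul_exp_neg_sq_div ht) b N
    _ ≤ ∫ u in Ioi (b - N), u * exp (-u ^ 2 / (2 * t)) :=
        tailMoment_le_integral_mul hf (integrable_exp_neg_sq_div ht)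
          (integrable_mul_exp_neg_sq_div ht) (sub_nonneg.mpr hN)
    _ = t * exp (-(b - N) ^ 2 / (2 * t)) := integral_Ioi_mul_exp_neg_sq_div ht _

lemma sqrt_two_div_sqrt_pi_mul_mul (ht : 0 < t) :
    √2 / √(π * t) * t = √(2 * t) / √π := by
  have hst : 0 < √t := sqrt_pos.mpr ht
  rw [sqrt_mul pi_pos.le, sqrt_mul zero_le_two]
  field_simp
  rw [sq_sqrt ht.le]

end Gaussian

theorem stmt7_general {Ω : Type*} [MeasurableSpace Ω] (P : Measure Ω)
    (t : ℝ) (ht : 0 < t) (M : ℕ → Ω → ℝ)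
    (htail : ∀ (k : ℕ) (c : ℝ), (k : ℝ) < c →
      P {ω | c < M k ω} = ENNReal.ofReal (Real.sqrt 2 / Real.sqrt (Real.pi * t) *
        ∫ u in Set.Ioi (c - (k : ℝ)), Real.exp (-u ^ 2 / (2 * t))))
    (n j : ℕ) (hn : 2 ≤ n) (hnj : n ≤ j) :
    P {ω | ∃ k ∈ Finset.range (j - n + 2), (j : ℝ) < M k ω} ≤
      ENNReal.ofReal (Real.sqrt (2 * t) / Real.sqrt Real.pi *
        Real.exp (-((n : ℝ) - 2) ^ 2 / (2 * t))) := by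
  set N := j - n + 2
  have hjN : (j : ℝ) - N = n - 2 := by
    simp only [N]; push_cast [Nat.cast_sub hnj]; ring
  have hunion : {ω | ∃ k ∈ Finset.range N, (j : ℝ) < M k ω}
      = ⋃ k ∈ Finset.range N, {ω | (j : ℝ) < M k ω} := by
    ext ω; simp
  have hterm : ∀ k ∈ Finset.range N, P {ω | (j : ℝ) < M k ω} = ENNReal.ofReal
      (√2 / √(π * t) * ∫ u in Ioi ((j : ℝ) - k), exp (-u ^ 2 / (2 * t))) := by
    intro k hk
    exact htail k j (by have := Finset.mem_range.mp hk; exact_mod_cast (by omega : k < j))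
  rw [hunion]
  refine (measure_biUnion_finset_le _ _).trans ?_
  rw [Finset.sum_congr rfl hterm, ← ENNReal.ofReal_sum_of_nonneg fun k _ =>
    mul_nonneg (by positivity) (setIntegral_nonneg measurableSet_Ioi fun u _ => (exp_pos _).le),
    ← Finset.mul_sum, ← sqrt_two_div_sqrt_pi_mul_mul ht, mul_assoc, ← hjN]
  have hNj : (N : ℝ) ≤ j := by exact_mod_cast (by omega : N ≤ j)
  exact ENNReal.ofReal_le_ofReal (mul_le_mul_of_nonneg_left
    (sum_integral_Ioi_exp_neg_sq_div_le ht j N hNj) (by positivity))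

/-- `M k` plays the role of the running maximum `max_{s ∈ [0,t]} w_k(s)` of independent
standard Brownian motions started at `k`; its tail is given by the reflection principle. -/
theorem stmt7 {Ω : Type*} [MeasurableSpace Ω] (P : Measure Ω) [IsProbabilityMeasure P]
    (t : ℝ) (ht : 0 < t) (M : ℕ → Ω → ℝ)
    (hmeas : ∀ k, Measurable (M k))
    (htail : ∀ (k : ℕ) (c : ℝ), (k : ℝ) < c →
      P {ω | c < M k ω} = ENNReal.ofReal (Real.sqrt 2 / Real.sqrt (Real.pi * t) *
        ∫ u in Set.Ioi (c - (k : ℝ)), Real.exp (-u ^ 2 / (2 * t))))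
    (n j : ℕ) (hn : 2 ≤ n) (hnj : n ≤ j) :
    P {ω | ∃ k ∈ Finset.range (j - n + 2), (j : ℝ) < M k ω} ≤
      ENNReal.ofReal (Real.sqrt (2 * t) / Real.sqrt Real.pi *
        Real.exp (-((n : ℝ) - 2) ^ 2 / (2 * t))) :=
  stmt7_general P t ht M htail n j hn hnj
end

section
/- Let p ≥ 1, t ∈ (0,T], and suppose nonnegative reals q_{k,n} (for k < n in ℤ) satisfy q_{k,n} ≤ √(r_{k-1} s_n) where r_m ≤ D e^{-(m-1-a)²/(2t)} for m ≥ a+2, r_m ≤ 1 always, s_m ≤ D e^{-(m-b)²/(2t)} for m ≥ b+1, s_m ≤ 1 always, with a < b fixed and D = 2√(2T)/√π. Then ∑_{k=0}^∞ ∑_{n=k+1}^∞ (n-k+1)^{p-1/2} q_{k,n}^{1/2} converges and is bounded by a constant depending only on p, a, b, T, uniformly in t ∈ (0,T]. -/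
/-!
Since `√q k n ≤ (r (k - 1))^(1/4) * (s n)^(1/4)`, the double series is dominated termwise by a
product `f k * g j` (with `n = k + 1 + j`) of two single series that do not depend on `t`: the
fourth root of a Gaussian bound of variance `t` is a Gaussian of variance `4t`, hence at most the
one of variance `4T`, and since `n ≥ j + 1` the factor coming from `s n` decays like a Gaussian in
`j`, which absorbs the polynomial weight `(j + 2)^(p - 1/2)`.
-/

open Real Filter Topology

noncomputable def gaussianTail (C σ θ c x : ℝ) : ℝ :=
  if θ ≤ x then C * exp (-(x - c) ^ 2 / σ) else 1

lemma gaussianTail_nonneg {C : ℝ} (hC : 0 ≤ C) (σ θ c x : ℝ) :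
    0 ≤ gaussianTail C σ θ c x := by
  unfold gaussianTail; split_ifs <;> positivity

lemma exp_neg_sq_div_le_mul_exp_neg (c x : ℝ) {σ : ℝ} (hσ : 0 < σ) :
    exp (-(x - c) ^ 2 / σ) ≤ exp (c + σ / 4) * exp (-x) := by
  rw [← exp_add, exp_le_exp, div_le_iff₀ hσ]
  nlinarith [sq_nonneg (x - c - σ / 2)]

lemma exp_neg_sq_div_le_of_le {x y t T : ℝ} (hx : 0 ≤ x) (hxy : x ≤ y) (ht : 0 < t)
    (htT : t ≤ T) : exp (-y ^ 2 / t) ≤ exp (-x ^ 2 / T) := by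
  rw [exp_le_exp, neg_div, neg_div, neg_le_neg_iff]
  calc x ^ 2 / T ≤ x ^ 2 / t := div_le_div_of_nonneg_left (sq_nonneg _) ht htT
    _ ≤ y ^ 2 / t := by gcongr

lemma summable_add_rpow_mul_exp_neg_nat (u e : ℝ) :
    Summable fun n : ℕ => ((n : ℝ) + u) ^ e * exp (-n) := by
  have hlim : Tendsto (fun n : ℕ => ((n : ℝ) + u) ^ e * exp (-(1 / 2) * ((n : ℝ) + u)))
      atTop (𝓝 0) :=
    (tendsto_rpow_mul_exp_neg_mul_atTop_nhds_zero e _ one_half_pos).comp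
      (tendsto_atTop_add_const_right _ u tendsto_natCast_atTop_atTop)
  refine ((summable_exp_nat_mul_iff.mpr (by norm_num : -(1 / 2 : ℝ) < 0)).mul_left
    (exp (u / 2))).of_norm_bounded_eventually_nat ?_
  filter_upwards [hlim.norm.eventually (gt_mem_nhds (by norm_num : ‖(0 : ℝ)‖ < 1))] with n hn
  have hsplit :
      exp (-n) = exp (-(1 / 2) * ((n : ℝ) + u)) * (exp (u / 2) * exp (n * -(1 / 2))) := by
    rw [← exp_add, ← exp_add]; ring_nf
  rw [hsplit, ← mul_assoc, norm_mul, norm_of_nonneg (r := exp (u / 2) * _) (by positivity)]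
  exact mul_le_of_le_one_left (by positivity) hn.le

lemma summable_add_rpow_mul_gaussianTail (u e δ C θ c : ℝ) {σ : ℝ} (hσ : 0 < σ) :
    Summable fun n : ℕ => ((n : ℝ) + u) ^ e * gaussianTail C σ θ c (n + δ) := by
  refine (((summable_add_rpow_mul_exp_neg_nat u e).abs).mul_left
    (|C| * exp (c + σ / 4 - δ))).of_norm_bounded_eventually_nat ?_
  filter_upwards [(tendsto_atTop_add_const_right _ δ
    tendsto_natCast_atTop_atTop).eventually_ge_atTop θ] with n hn
  rw [gaussianTail, if_pos hn, norm_mul, norm_mul, norm_of_nonneg (exp_nonneg _), abs_mul,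
    abs_of_nonneg (exp_nonneg _), Real.norm_eq_abs, Real.norm_eq_abs]
  calc |((n : ℝ) + u) ^ e| * (|C| * exp (-((n : ℝ) + δ - c) ^ 2 / σ))
      ≤ |((n : ℝ) + u) ^ e| * (|C| * (exp (c + σ / 4) * exp (-((n : ℝ) + δ)))) := by
        gcongr; exact exp_neg_sq_div_le_mul_exp_neg c _ hσ
    _ = |C| * exp (c + σ / 4 - δ) * (|((n : ℝ) + u) ^ e| * exp (-n)) := by
        rw [sub_eq_add_neg, exp_add (c + σ / 4), neg_add, exp_add (-(n : ℝ))]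
        ring

lemma sqrt_sqrt_mul_exp (D y : ℝ) : √√(D * exp y) = √√D * exp (y / 4) := by
  rw [sqrt_mul' _ (exp_nonneg _), sqrt_mul' _ (sqrt_nonneg _), ← exp_half, ← exp_half]
  ring_nf

lemma sqrt_le_sqrt_sqrt_mul_sqrt_sqrt {v x y : ℝ} (hy : 0 ≤ y) (hv : v ≤ √(x * y)) :
    √v ≤ √√x * √√y := by
  rw [← sqrt_mul' _ (sqrt_nonneg _), ← sqrt_mul' _ hy]
  exact sqrt_le_sqrt hv

lemma sqrt_sqrt_le_gaussianTail {v D t T θ c x y : ℝ} (hv : v ≤ 1)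
    (hv_tail : θ ≤ y → v ≤ D * exp (-(y - c) ^ 2 / (2 * t))) (hcθ : c ≤ θ) (ht : 0 < t)
    (htT : t ≤ T) (hxy : x ≤ y) : √√v ≤ gaussianTail (√√D) (8 * T) θ c x := by
  unfold gaussianTail
  split_ifs with hx
  · calc √√v ≤ √√(D * exp (-(y - c) ^ 2 / (2 * t))) :=
          sqrt_le_sqrt (sqrt_le_sqrt (hv_tail (hx.trans hxy)))
      _ = √√D * exp (-(y - c) ^ 2 / (8 * t)) := by rw [sqrt_sqrt_mul_exp]; ring_nf
      _ ≤ √√D * exp (-(x - c) ^ 2 / (8 * T)) := by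
          gcongr √√D * ?_
          exact exp_neg_sq_div_le_of_le (x := x - c) (y := y - c) (t := 8 * t) (T := 8 * T)
            (by linarith) (by linarith) (by positivity) (by linarith)
  · exact sqrt_le_one.mpr (sqrt_le_one.mpr hv)

theorem stmt14_general (p T a b : ℝ) (hT : 0 < T) :
    ∃ K : ℝ, ∀ t ∈ Set.Ioc (0 : ℝ) T, ∀ q : ℤ → ℤ → ℝ, ∀ r s : ℤ → ℝ,
      (∀ k n : ℤ, k < n → 0 ≤ q k n ∧ q k n ≤ Real.sqrt (r (k - 1) * s n)) →
      (∀ m : ℤ, 0 ≤ r m ∧ r m ≤ 1) →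
      (∀ m : ℤ, 0 ≤ s m ∧ s m ≤ 1) →
      (∀ m : ℤ, a + 2 ≤ (m : ℝ) →
        r m ≤ 2 * Real.sqrt (2 * T) / Real.sqrt Real.pi *
          Real.exp (-((m : ℝ) - 1 - a) ^ 2 / (2 * t))) →
      (∀ m : ℤ, b + 1 ≤ (m : ℝ) →
        s m ≤ 2 * Real.sqrt (2 * T) / Real.sqrt Real.pi *
          Real.exp (-((m : ℝ) - b) ^ 2 / (2 * t))) →
      Summable (fun kj : ℕ × ℕ =>
          ((kj.2 : ℝ) + 2) ^ (p - 1 / 2) *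
            Real.sqrt (q (kj.1 : ℤ) ((kj.1 : ℤ) + 1 + (kj.2 : ℤ)))) ∧
        (∑' kj : ℕ × ℕ, ((kj.2 : ℝ) + 2) ^ (p - 1 / 2) *
          Real.sqrt (q (kj.1 : ℤ) ((kj.1 : ℤ) + 1 + (kj.2 : ℤ)))) ≤ K := by
  set C := √√(2 * √(2 * T) / √π)
  set f : ℕ → ℝ := fun k => gaussianTail C (8 * T) (a + 2) (a + 1) ((k : ℝ) - 1)
  set g : ℕ → ℝ := fun j =>
    ((j : ℝ) + 2) ^ (p - 1 / 2) * gaussianTail C (8 * T) (b + 1) b ((j : ℝ) + 1)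
  have hC : 0 ≤ C := sqrt_nonneg _
  have hf : Summable f := by
    simpa [f, sub_eq_add_neg] using
      summable_add_rpow_mul_gaussianTail 0 0 (-1) C (a + 2) (a + 1) (by positivity : 0 < 8 * T)
  have hg : Summable g :=
    summable_add_rpow_mul_gaussianTail 2 (p - 1 / 2) 1 C (b + 1) b (by positivity)
  have hfg := hf.mul_of_nonneg hg (fun k => gaussianTail_nonneg hC ..)
    (fun j => mul_nonneg (by positivity) (gaussianTail_nonneg hC ..))
  refine ⟨∑' kj : ℕ × ℕ, f kj.1 * g kj.2, ?_⟩
  rintro t ⟨ht, htT⟩ q r s hq hr hs hr_tail hs_tail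
  have hle : ∀ kj : ℕ × ℕ, ((kj.2 : ℝ) + 2) ^ (p - 1 / 2) *
      √(q kj.1 (kj.1 + 1 + kj.2)) ≤ f kj.1 * g kj.2 := by
    rintro ⟨k, j⟩
    have hr_k : √√(r (k - 1)) ≤ f k :=
      sqrt_sqrt_le_gaussianTail (y := ((k - 1 : ℤ) : ℝ)) (hr _).2
        (fun hm => by convert hr_tail _ hm using 5; ring) (by linarith) ht htT (by push_cast; rfl)
    have hs_n : √√(s (k + 1 + j)) ≤ gaussianTail C (8 * T) (b + 1) b ((j : ℝ) + 1) :=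
      sqrt_sqrt_le_gaussianTail (hs _).2 (hs_tail _) (by linarith) ht htT (by push_cast; linarith)
    calc ((j : ℝ) + 2) ^ (p - 1 / 2) * √(q k (k + 1 + j))
        ≤ ((j : ℝ) + 2) ^ (p - 1 / 2) * (√√(r (k - 1)) * √√(s (k + 1 + j))) := by
          gcongr
          exact sqrt_le_sqrt_sqrt_mul_sqrt_sqrt (hs _).1 (hq _ _ (by omega)).2
      _ ≤ ((j : ℝ) + 2) ^ (p - 1 / 2) *
            (f k * gaussianTail C (8 * T) (b + 1) b ((j : ℝ) + 1)) := by
          gcongr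
          exact gaussianTail_nonneg hC ..
      _ = f k * g j := by ring
  have hsum := hfg.of_nonneg_of_le (fun _ => mul_nonneg (by positivity) (sqrt_nonneg _)) hle
  exact ⟨hsum, hsum.tsum_le_tsum hle hfg⟩

theorem stmt14 (p T a b : ℝ) (hp : 1 ≤ p) (hT : 0 < T) (hab : a < b) :
    ∃ K : ℝ, ∀ t ∈ Set.Ioc (0 : ℝ) T, ∀ q : ℤ → ℤ → ℝ, ∀ r s : ℤ → ℝ,
      (∀ k n : ℤ, k < n → 0 ≤ q k n ∧ q k n ≤ Real.sqrt (r (k - 1) * s n)) →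
      (∀ m : ℤ, 0 ≤ r m ∧ r m ≤ 1) →
      (∀ m : ℤ, 0 ≤ s m ∧ s m ≤ 1) →
      (∀ m : ℤ, a + 2 ≤ (m : ℝ) →
        r m ≤ 2 * Real.sqrt (2 * T) / Real.sqrt Real.pi *
          Real.exp (-((m : ℝ) - 1 - a) ^ 2 / (2 * t))) →
      (∀ m : ℤ, b + 1 ≤ (m : ℝ) →
        s m ≤ 2 * Real.sqrt (2 * T) / Real.sqrt Real.pi *
          Real.exp (-((m : ℝ) - b) ^ 2 / (2 * t))) →
      Summable (fun kj : ℕ × ℕ =>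
          ((kj.2 : ℝ) + 2) ^ (p - 1 / 2) *
            Real.sqrt (q (kj.1 : ℤ) ((kj.1 : ℤ) + 1 + (kj.2 : ℤ)))) ∧
        (∑' kj : ℕ × ℕ, ((kj.2 : ℝ) + 2) ^ (p - 1 / 2) *
          Real.sqrt (q (kj.1 : ℤ) ((kj.1 : ℤ) + 1 + (kj.2 : ℤ)))) ≤ K :=
  stmt14_general p T a b hT
end
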